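/- arXiv:2301.13652 — 10 statements merged into one kernel-verified Lean document; each statement's English description precedes it below -/
import Mathlib

section
/- If v is a cancelable valuation function, then for any sets S, T ⊆ M and any R ⊆ M \ (S ∪ T), v(S) ≥ v(T) implies v(S ∪ R) ≥ v(T ∪ R). -/
/-- A valuation `v` on subsets of the goods is *cancelable* if
`v (S ∪ {g}) > v (T ∪ {g})` implies `v S > v T` for every `g ∉ S ∪ T`. -/
def Cancelable {G : Type*} [DecidableEq G] (v : Finset G → ℝ) : Prop :=
  ∀ S T : Finset G, ∀ g, g ∉ S ∪ T → v (insert g S) > v (insert g T) → v S > v T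

namespace Cancelable

variable {G : Type*} [DecidableEq G] {v : Finset G → ℝ}

theorem insert_le_insert (hc : Cancelable v) {S T : Finset G} {g : G} (hg : g ∉ S ∪ T)
    (h : v T ≤ v S) : v (insert g T) ≤ v (insert g S) :=
  not_lt.1 fun hlt => (hc T S g (by rwa [Finset.union_comm]) hlt).not_ge h

theorem union_le_union (hc : Cancelable v) {S T R : Finset G} (hR : ∀ g ∈ R, g ∉ S ∪ T)
    (h : v T ≤ v S) : v (T ∪ R) ≤ v (S ∪ R) := by
  induction R using Finset.induction_on with
  | empty => simpa using h
  | @insert g R hgR ih =>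
    have hg : g ∉ S ∪ T := hR g (Finset.mem_insert_self g R)
    have hg' : g ∉ (S ∪ R) ∪ (T ∪ R) := by
      simp only [Finset.mem_union, not_or] at hg ⊢
      exact ⟨⟨hg.1, hgR⟩, hg.2, hgR⟩
    rw [Finset.union_insert, Finset.union_insert]
    exact hc.insert_le_insert hg' (ih fun x hx => hR x (Finset.mem_insert_of_mem hx))

end Cancelable

theorem cancelable_union_ge_general {G : Type*} [DecidableEq G] (v : Finset G → ℝ)
    (hc : Cancelable v)
    (S T R : Finset G) (hR : ∀ g ∈ R, g ∉ S ∪ T) :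
    v S ≥ v T → v (S ∪ R) ≥ v (T ∪ R) :=
  hc.union_le_union hR

/-- If `v` is cancelable, then for any sets `S, T` and any `R` disjoint from `S ∪ T`,
`v S ≥ v T` implies `v (S ∪ R) ≥ v (T ∪ R)`. -/
theorem cancelable_union_ge {G : Type*} [DecidableEq G] (v : Finset G → ℝ)
    (hnn : ∀ S, 0 ≤ v S) (hc : Cancelable v)
    (S T R : Finset G) (hR : ∀ g ∈ R, g ∉ S ∪ T) :
    v S ≥ v T → v (S ∪ R) ≥ v (T ∪ R) :=
  cancelable_union_ge_general v hc S T R hR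
end

section
/- Let v be a cancelable valuation function and let X = {x_1, …, x_k} and Y = {y_1, …, y_k} be two sets of goods of equal cardinality k (with all x_j distinct and all y_j distinct). If v({x_j}) ≥ v({y_j}) for every j ∈ [k], then v(X) ≥ v(Y). -/
open Finset Function

theorem Finset.image_univ_eq_insert {ι α : Type*} [Fintype ι] [DecidableEq ι] [DecidableEq α]
    (f : ι → α) (j : ι) : univ.image f = insert (f j) ((univ.erase j).image f) := by
  rw [← image_insert, insert_erase (mem_univ j)]

theorem Finset.image_univ_update {ι α : Type*} [Fintype ι] [DecidableEq ι] [DecidableEq α]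
    (f : ι → α) (j : ι) (a : α) :
    univ.image (update f j a) = insert a ((univ.erase j).image f) := by
  rw [image_univ_eq_insert _ j, update_self]
  congr 1
  exact image_congr fun i hi => update_of_ne (ne_of_mem_erase hi) a f

namespace Cancelable

variable {G : Type*} [DecidableEq G] {v : Finset G → ℝ}

theorem lt_of_union_lt (hc : Cancelable v) {S T C : Finset G} (hS : Disjoint S C)
    (hT : Disjoint T C) (h : v (T ∪ C) < v (S ∪ C)) : v T < v S := by
  induction C using Finset.induction_on generalizing S T with
  | empty => simpa using h
  | @insert c C hcC ih =>
    rw [disjoint_insert_right] at hS hT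
    rw [union_insert, union_insert] at h
    refine ih hS.2 hT.2 (hc _ _ c ?_ h)
    simp [hS.1, hT.1, hcC]

theorem insert_le_insert_s3 (hc : Cancelable v) {a b : G} {C : Finset G} (ha : a ∉ C) (hb : b ∉ C)
    (hab : v {a} ≤ v {b}) : v (insert a C) ≤ v (insert b C) := by
  by_contra! h
  rw [insert_eq, insert_eq] at h
  exact (hc.lt_of_union_lt (disjoint_singleton_left.2 ha) (disjoint_singleton_left.2 hb) h).not_ge
    hab

theorem image_le_image_update (hc : Cancelable v) {ι : Type*} [Fintype ι] [DecidableEq ι]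
    {y : ι → G} (hy : Injective y) {j : ι} {g : G} (hg : g ∉ Set.range y)
    (hle : v {y j} ≤ v {g}) : v (univ.image y) ≤ v (univ.image (update y j g)) := by
  have hC : ∀ i, y i ∈ (univ.erase j).image y → i ≠ j := fun i hi => by
    obtain ⟨i', hi', hyi⟩ := mem_image.1 hi
    exact hy hyi ▸ ne_of_mem_erase hi'
  rw [image_univ_update, image_univ_eq_insert y j]
  refine hc.insert_le_insert_s3 (fun h => hC j h rfl) (fun h => ?_) hle
  obtain ⟨i, -, rfl⟩ := mem_image.1 h
  exact hg ⟨i, rfl⟩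

theorem image_le_image (hc : Cancelable v) {ι : Type*} [Fintype ι] [DecidableEq ι]
    {x y : ι → G} (hx : Injective x) (hy : Injective y) (h : ∀ j, v {y j} ≤ v {x j}) :
    v (univ.image y) ≤ v (univ.image x) := by
  by_cases hxy : ∀ j, x j ∈ Set.range y
  · suffices univ.image x = univ.image y by rw [this]
    refine eq_of_subset_of_card_le (image_subset_iff.2 fun j _ => ?_) ?_
    · obtain ⟨i, hi⟩ := hxy j
      exact hi ▸ mem_image_of_mem y (mem_univ i)
    · rw [card_image_of_injective _ hy, card_image_of_injective _ hx]
  · obtain ⟨j, hj⟩ := not_forall.1 hxy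
    have hy' : Injective (update y j (x j)) := fun a b _ => by grind [update_apply, Injective]
    calc v (univ.image y) ≤ v (univ.image (update y j (x j))) :=
          hc.image_le_image_update hy hj (h j)
      _ ≤ v (univ.image x) := hc.image_le_image hx hy' fun i => by
          rcases eq_or_ne i j with rfl | hij
          · rw [update_self]
          · rw [update_of_ne hij]; exact h i
termination_by (univ.filter fun i => x i ≠ y i).card
-- `x j ∉ range y` makes `j` a mismatch, and the update repairs it without creating new ones.
decreasing_by
  refine card_lt_card ⟨fun i => ?_, fun hsub => ?_⟩
  · grind [update_apply]
  · have := hsub (mem_filter.2 ⟨mem_univ j, fun h => hj ⟨j, h.symm⟩⟩)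
    simp at this

end Cancelable

theorem cancelable_pointwise_domination_general {G : Type*} [DecidableEq G] (v : Finset G → ℝ)
    (hc : Cancelable v)
    {k : ℕ} (x y : Fin k → G)
    (hx : Function.Injective x) (hy : Function.Injective y)
    (h : ∀ j : Fin k, v {x j} ≥ v {y j}) :
    v (Finset.univ.image x) ≥ v (Finset.univ.image y) :=
  hc.image_le_image hx hy h

/-- If `v` is cancelable and `X = {x_1, …, x_k}`, `Y = {y_1, …, y_k}` (all `x_j` distinct,
all `y_j` distinct) satisfy `v {x_j} ≥ v {y_j}` for every `j`, then `v X ≥ v Y`. -/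
theorem cancelable_pointwise_domination {G : Type*} [DecidableEq G] (v : Finset G → ℝ)
    (hnn : ∀ S, 0 ≤ v S) (hc : Cancelable v)
    {k : ℕ} (x y : Fin k → G)
    (hx : Function.Injective x) (hy : Function.Injective y)
    (h : ∀ j : Fin k, v {x j} ≥ v {y j}) :
    v (Finset.univ.image x) ≥ v (Finset.univ.image y) :=
  cancelable_pointwise_domination_general v hc x y hx hy h
end

section
/- A non-decreasing function v : 2^M → ℝ≥0 is submodular (i.e., v(S ∪ {g}) − v(S) ≥ v(T ∪ {g}) − v(T) for all S ⊆ T ⊆ M and g ∉ T) if and only if for all S, T ⊆ M, v(T) ≤ v(S) + Σ_{g ∈ T \ S} (v(S ∪ {g}) − v(S)). -/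
/-!
Write `Δ_g(S) = v(S ∪ {g}) − v(S)`. If the marginals `Δ_g` are antitone, then adding the elements
of `T \ S` to `S` one at a time and bounding each increment by `Δ_g(S)` gives
`v(S ∪ T) ≤ v(S) + ∑_{g ∈ T \ S} Δ_g(S)`, and monotonicity gives `v(T) ≤ v(S ∪ T)`.
Conversely, applying the inequality to `S` and `S ∪ {a, g}` yields `Δ_g(S ∪ {a}) ≤ Δ_g(S)`,
and submodularity for `S ⊆ T` follows by adding the elements of `T \ S` one at a time.
-/

namespace SetFunction

open Finset

variable {G : Type*} [DecidableEq G] (v : Finset G → ℝ)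

def marginal (g : G) (S : Finset G) : ℝ := v (insert g S) - v S

theorem sub_le_sum_marginal
    (hsub : ∀ S T : Finset G, ∀ g, S ⊆ T → g ∉ T → marginal v g T ≤ marginal v g S)
    (S : Finset G) {D : Finset G} (hSD : Disjoint S D) :
    v (S ∪ D) - v S ≤ ∑ g ∈ D, marginal v g S := by
  induction D using Finset.induction_on with
  | empty => simp
  | insert a D haD ih =>
    have haS : a ∉ S ∪ D := by
      simp only [mem_union, not_or]
      exact ⟨disjoint_right.mp hSD (mem_insert_self a D), haD⟩
    have hstep : marginal v a (S ∪ D) ≤ marginal v a S :=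
      hsub S (S ∪ D) a subset_union_left haS
    rw [union_insert, sum_insert haD]
    have := ih (disjoint_of_subset_right (subset_insert a D) hSD)
    have hinc : marginal v a (S ∪ D) = v (insert a (S ∪ D)) - v (S ∪ D) := rfl
    linarith

theorem le_add_sum_marginal
    (hsub : ∀ S T : Finset G, ∀ g, S ⊆ T → g ∉ T → marginal v g T ≤ marginal v g S)
    (hmono : Monotone v) (S T : Finset G) :
    v T ≤ v S + ∑ g ∈ T \ S, marginal v g S := by
  have h := sub_le_sum_marginal v hsub S (disjoint_sdiff : Disjoint S (T \ S))
  rw [union_sdiff_self_eq_union] at h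
  have := hmono (subset_union_right : T ⊆ S ∪ T)
  linarith

theorem marginal_insert_le
    (hnwf : ∀ S T : Finset G, v T ≤ v S + ∑ g ∈ T \ S, marginal v g S)
    {S : Finset G} {a g : G} (hg : g ∉ insert a S) :
    marginal v g (insert a S) ≤ marginal v g S := by
  by_cases haS : a ∈ S
  · rw [insert_eq_of_mem haS]
  have hga : g ≠ a := fun h => hg (h ▸ mem_insert_self a S)
  have hgS : g ∉ S := fun h => hg (mem_insert_of_mem h)
  have hpair : insert g (insert a S) \ S = {g, a} := by
    rw [insert_sdiff_of_notMem _ hgS, insert_sdiff_of_notMem _ haS, sdiff_self,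
      bot_eq_empty, insert_empty_eq]
  have h := hnwf S (insert g (insert a S))
  rw [hpair, sum_pair hga] at h
  unfold marginal at h ⊢
  linarith

theorem marginal_union_le
    (hnwf : ∀ S T : Finset G, v T ≤ v S + ∑ g ∈ T \ S, marginal v g S)
    (S : Finset G) {D : Finset G} {g : G} (hg : g ∉ S ∪ D) :
    marginal v g (S ∪ D) ≤ marginal v g S := by
  induction D using Finset.induction_on with
  | empty => simp
  | insert a D _ ih =>
    rw [union_insert] at hg ⊢
    exact (marginal_insert_le v hnwf hg).trans (ih fun h => hg (mem_insert_of_mem h))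

end SetFunction

open Finset SetFunction in
theorem submodular_iff_nwf_general {G : Type*} [DecidableEq G] (v : Finset G → ℝ)
    (hmono : ∀ S T : Finset G, S ⊆ T → v S ≤ v T) :
    (∀ S T : Finset G, ∀ g, S ⊆ T → g ∉ T →
        v (insert g T) - v T ≤ v (insert g S) - v S) ↔
      (∀ S T : Finset G, v T ≤ v S + ∑ g ∈ T \ S, (v (insert g S) - v S)) := by
  constructor
  · intro hsub
    exact le_add_sum_marginal v hsub hmono
  · intro hnwf S T g hST hgT
    rw [← union_eq_right.mpr hST] at hgT ⊢
    exact marginal_union_le v hnwf S hgT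

/-- Nemhauser–Wolsey–Fisher characterization: a non-decreasing valuation `v` is submodular
iff `v T ≤ v S + ∑_{g ∈ T \ S} (v (S ∪ {g}) − v S)` for all `S, T`. -/
theorem submodular_iff_nwf {G : Type*} [DecidableEq G] (v : Finset G → ℝ)
    (hnn : ∀ S, 0 ≤ v S)
    (hmono : ∀ S T : Finset G, S ⊆ T → v S ≤ v T) :
    (∀ S T : Finset G, ∀ g, S ⊆ T → g ∉ T →
        v (insert g T) - v T ≤ v (insert g S) - v S) ↔
      (∀ S T : Finset G, v T ≤ v S + ∑ g ∈ T \ S, (v (insert g S) - v S)) :=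
  submodular_iff_nwf_general v hmono
end

section
/- Let v be a non-decreasing submodular function on a finite set M, and let X = {x_1, …, x_k} and Y = {y_1, …, y_k} be two k-element subsets of M. If for every j ∈ [k] the marginal values satisfy v(x_j | {x_1,…,x_{j−1}}) ≥ v(y_j | {x_1,…,x_{j−1}}), then v(X) ≥ (1/2)·v(Y). -/
/-!
Telescope `v (X ∪ Y)` by adding `y_1, …, y_k` one at a time on top of `X`. The `j`-th increment
is the marginal value of `y_j` over a superset of `{x_1, …, x_{j−1}}`, so by submodularity (or
monotonicity, when `y_j` is already present) it is at most `v(y_j | {x_1, …, x_{j−1}})`, hence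
at most `v(x_j | {x_1, …, x_{j−1}})`. These last increments telescope to `v X`, so
`v Y ≤ v (X ∪ Y) ≤ 2 v X`.
-/

/-- The set `{x_1, …, x_{r−1}}` of goods indexed strictly below `r`. -/
def prefixSet {G : Type*} [DecidableEq G] {k : ℕ} (x : Fin k → G) (r : Fin k) : Finset G :=
  (Finset.univ.filter fun j => j < r).image x

open Finset

section
variable {G : Type*} [DecidableEq G]

def marginal (v : Finset G → ℝ) (S : Finset G) (g : G) : ℝ := v (insert g S) - v S

lemma marginal_le_marginal_of_subset {v : Finset G → ℝ} (hmono : Monotone v)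
    (hsub : ∀ S T : Finset G, ∀ g, S ⊆ T → g ∉ T →
      v (insert g T) - v T ≤ v (insert g S) - v S)
    {S T : Finset G} (hST : S ⊆ T) (g : G) : marginal v T g ≤ marginal v S g := by
  by_cases hg : g ∈ T
  · have : v S ≤ v (insert g S) := hmono (subset_insert g S)
    simp only [marginal, insert_eq_of_mem hg]
    linarith
  · exact hsub S T g hST hg

variable {k : ℕ}

lemma prefixSet_eq_image_Iio (x : Fin k → G) (r : Fin k) : prefixSet x r = (Iio r).image x := by
  rw [prefixSet, filter_gt_eq_Iio]

lemma prefixSet_subset_image_univ (x : Fin k → G) (r : Fin k) : prefixSet x r ⊆ univ.image x :=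
  image_subset_image (filter_subset _ _)

lemma prefixSet_castSucc (x : Fin (k + 1) → G) (j : Fin k) :
    prefixSet x j.castSucc = prefixSet (x ∘ Fin.castSucc) j := by
  simp only [prefixSet_eq_image_Iio, ← Fin.finsetImage_castSucc_Iio, image_image]

lemma prefixSet_last (x : Fin (k + 1) → G) :
    prefixSet x (Fin.last k) = univ.image (x ∘ Fin.castSucc) := by
  rw [prefixSet_eq_image_Iio, Fin.Iio_last_eq_map, map_eq_image, image_image]
  rfl

lemma image_univ_eq_insert_prefixSet_last (x : Fin (k + 1) → G) :
    univ.image x = insert (x (Fin.last k)) (prefixSet x (Fin.last k)) := by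
  rw [prefixSet_eq_image_Iio, ← image_insert, Iio_insert, ← Fin.top_eq_last, Iic_top]

lemma union_image_univ_eq_add_sum_marginal (v : Finset G → ℝ) (S : Finset G) (y : Fin k → G) :
    v (S ∪ univ.image y) = v S + ∑ j, marginal v (S ∪ prefixSet y j) (y j) := by
  induction k with
  | zero => simp
  | succ k ih =>
    rw [Fin.sum_univ_castSucc, image_univ_eq_insert_prefixSet_last, union_insert, prefixSet_last]
    simp only [prefixSet_castSucc]
    have ih' := ih (y ∘ Fin.castSucc)
    simp only [Function.comp_apply] at ih'
    rw [← add_assoc, ← ih', marginal]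
    ring

lemma image_univ_eq_sum_marginal (v : Finset G → ℝ) (hz : v ∅ = 0) (x : Fin k → G) :
    v (univ.image x) = ∑ j, marginal v (prefixSet x j) (x j) := by
  simpa [hz] using union_image_univ_eq_add_sum_marginal v ∅ x

end

theorem submodular_half_bound_general {G : Type*} [DecidableEq G] (v : Finset G → ℝ)
    (hz : v ∅ = 0)
    (hmono : ∀ S T : Finset G, S ⊆ T → v S ≤ v T)
    (hsub : ∀ S T : Finset G, ∀ g, S ⊆ T → g ∉ T →
      v (insert g T) - v T ≤ v (insert g S) - v S)
    {k : ℕ} (x y : Fin k → G)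
    (h : ∀ j : Fin k,
      v (insert (x j) (prefixSet x j)) - v (prefixSet x j) ≥
        v (insert (y j) (prefixSet x j)) - v (prefixSet x j)) :
    v (Finset.univ.image x) ≥ (1 / 2) * v (Finset.univ.image y) := by
  set X := univ.image x
  have hv_mono : Monotone v := fun S T => hmono S T
  have marginal_y_le_x (j : Fin k) :
      marginal v (X ∪ prefixSet y j) (y j) ≤ marginal v (prefixSet x j) (x j) :=
    (marginal_le_marginal_of_subset hv_mono hsub
      ((prefixSet_subset_image_univ x j).trans subset_union_left) (y j)).trans (h j)
  have : v (univ.image y) ≤ 2 * v X := calc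
    v (univ.image y) ≤ v (X ∪ univ.image y) := hv_mono subset_union_right
    _ = v X + ∑ j, marginal v (X ∪ prefixSet y j) (y j) :=
      union_image_univ_eq_add_sum_marginal v X y
    _ ≤ v X + ∑ j, marginal v (prefixSet x j) (x j) := by gcongr with j; exact marginal_y_le_x j
    _ = 2 * v X := by rw [← image_univ_eq_sum_marginal v hz x]; ring
  linarith

/-- For a non-decreasing submodular `v` and `k`-element sets `X = {x_1,…,x_k}`,
`Y = {y_1,…,y_k}`: if `v(x_j | {x_1,…,x_{j−1}}) ≥ v(y_j | {x_1,…,x_{j−1}})` for every `j`,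
then `v X ≥ (1/2)·v Y`. -/
theorem submodular_half_bound {G : Type*} [DecidableEq G] (v : Finset G → ℝ)
    (hnn : ∀ S, 0 ≤ v S) (hz : v ∅ = 0)
    (hmono : ∀ S T : Finset G, S ⊆ T → v S ≤ v T)
    (hsub : ∀ S T : Finset G, ∀ g, S ⊆ T → g ∉ T →
      v (insert g T) - v T ≤ v (insert g S) - v S)
    {k : ℕ} (x y : Fin k → G)
    (hx : Function.Injective x) (hy : Function.Injective y)
    (h : ∀ j : Fin k,
      v (insert (x j) (prefixSet x j)) - v (prefixSet x j) ≥
        v (insert (y j) (prefixSet x j)) - v (prefixSet x j)) :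
    v (Finset.univ.image x) ≥ (1 / 2) * v (Finset.univ.image y) :=
  submodular_half_bound_general v hz hmono hsub x y h
end

section
/- Let v be a non-decreasing submodular function on a finite set M, and let X = {x_1, …, x_k} and Y = {y_1, …, y_k} be k-element subsets of M. If for every r ∈ [k−1] the marginal values satisfy v(x_r | {x_1,…,x_{r−1}}) ≥ v(y_{r+1} | {x_1,…,x_{r−1}}), then v(X) ≥ (1/2)·v(Y \ {y_1}). -/
open Finset

theorem Fin.sum_univ_succ_sub_castSucc {M : Type*} [AddCommGroup M] {m : ℕ}
    (f : Fin (m + 1) → M) : ∑ i : Fin m, (f i.succ - f i.castSucc) = f (Fin.last m) - f 0 := by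
  induction m with
  | zero => simp
  | succ m ih =>
    rw [Fin.sum_univ_castSucc]
    simp only [Fin.succ_castSucc]
    rw [ih fun i => f i.castSucc, Fin.succ_last, Fin.castSucc_zero]
    abel

section Prefix

variable {G : Type*} [DecidableEq G] {m : ℕ} (x : Fin (m + 1) → G)

@[simp]
theorem prefixSet_zero : prefixSet x 0 = ∅ := by
  simp [prefixSet]

theorem prefixSet_subset_image (r : Fin (m + 1)) : prefixSet x r ⊆ univ.image x :=
  image_subset_image (filter_subset _ _)

theorem insert_prefixSet_castSucc (i : Fin m) :
    insert (x i.castSucc) (prefixSet x i.castSucc) = prefixSet x i.succ := by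
  ext g
  simp only [prefixSet, mem_insert, mem_image, mem_filter, mem_univ, true_and]
  constructor
  · rintro (rfl | ⟨j, hj, rfl⟩)
    · exact ⟨_, Fin.castSucc_lt_succ, rfl⟩
    · exact ⟨j, hj.trans Fin.castSucc_lt_succ, rfl⟩
  · rintro ⟨j, hj, rfl⟩
    rcases (Fin.le_castSucc_iff.mpr hj).eq_or_lt with rfl | hlt
    · exact Or.inl rfl
    · exact Or.inr ⟨j, hlt, rfl⟩

end Prefix

theorem Fin.erase_image_zero_subset_image_succ {α : Type*} [DecidableEq α] {m : ℕ}
    (y : Fin (m + 1) → α) :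
    (univ.image y).erase (y 0) ⊆ univ.image fun i : Fin m => y i.succ := by
  intro g hg
  obtain ⟨hg0, j, -, rfl⟩ := by simpa using hg
  obtain ⟨i, rfl⟩ := Fin.exists_succ_eq.mpr fun hj => hg0 (congrArg y hj)
  exact mem_image_of_mem _ (mem_univ i)

section Submodular

variable {G : Type*} [DecidableEq G] {v : Finset G → ℝ}

theorem marginal_antitone (hmono : ∀ S T : Finset G, S ⊆ T → v S ≤ v T)
    (hsub : ∀ S T : Finset G, ∀ g, S ⊆ T → g ∉ T →
      v (insert g T) - v T ≤ v (insert g S) - v S)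
    {S T : Finset G} (hST : S ⊆ T) (g : G) :
    v (insert g T) - v T ≤ v (insert g S) - v S := by
  by_cases hg : g ∈ T
  · have := hmono _ _ (subset_insert g S)
    rw [insert_eq_of_mem hg]
    linarith
  · exact hsub S T g hST hg

theorem le_add_sum_marginal (hmono : ∀ S T : Finset G, S ⊆ T → v S ≤ v T)
    (hsub : ∀ S T : Finset G, ∀ g, S ⊆ T → g ∉ T →
      v (insert g T) - v T ≤ v (insert g S) - v S)
    {ι : Type*} [DecidableEq ι] (X : Finset G) (s : Finset ι) (f : ι → G) :
    v (X ∪ s.image f) ≤ v X + ∑ i ∈ s, (v (insert (f i) X) - v X) := by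
  induction s using Finset.induction_on with
  | empty => simp
  | insert a s ha ih =>
    rw [sum_insert ha, image_insert, union_insert]
    have := marginal_antitone hmono hsub (subset_union_left : X ⊆ X ∪ s.image f) (f a)
    linarith

end Submodular

theorem submodular_half_bound_shifted_general {G : Type*} [DecidableEq G] (v : Finset G → ℝ)
    (hz : v ∅ = 0)
    (hmono : ∀ S T : Finset G, S ⊆ T → v S ≤ v T)
    (hsub : ∀ S T : Finset G, ∀ g, S ⊆ T → g ∉ T →
      v (insert g T) - v T ≤ v (insert g S) - v S)
    {k : ℕ} (hk : 0 < k) (x y : Fin k → G)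
    (h : ∀ r : Fin k, ∀ hr : r.val + 1 < k,
      v (insert (x r) (prefixSet x r)) - v (prefixSet x r) ≥
        v (insert (y ⟨r.val + 1, hr⟩) (prefixSet x r)) - v (prefixSet x r)) :
    v (Finset.univ.image x) ≥
      (1 / 2) * v ((Finset.univ.image y).erase (y ⟨0, hk⟩)) := by
  obtain ⟨m, rfl⟩ : ∃ m, k = m + 1 := Nat.exists_eq_succ_of_ne_zero hk.ne'
  set X := univ.image x
  have hstep (i : Fin m) : v (insert (y i.succ) X) - v X ≤
      v (prefixSet x i.succ) - v (prefixSet x i.castSucc) :=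
    calc v (insert (y i.succ) X) - v X
        ≤ v (insert (y i.succ) (prefixSet x i.castSucc)) - v (prefixSet x i.castSucc) :=
          marginal_antitone hmono hsub (prefixSet_subset_image x _) _
      _ ≤ v (prefixSet x i.succ) - v (prefixSet x i.castSucc) := by
          rw [← insert_prefixSet_castSucc]
          exact h i.castSucc (by simp)
  have hY : v ((univ.image y).erase (y ⟨0, hk⟩)) ≤ 2 * v X :=
    calc v ((univ.image y).erase (y ⟨0, hk⟩))
        ≤ v (X ∪ univ.image fun i : Fin m => y i.succ) :=
          hmono _ _ ((Fin.erase_image_zero_subset_image_succ y).trans subset_union_right)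
      _ ≤ v X + ∑ i : Fin m, (v (insert (y i.succ) X) - v X) :=
          le_add_sum_marginal hmono hsub _ _ _
      _ ≤ v X + ∑ i : Fin m, (v (prefixSet x i.succ) - v (prefixSet x i.castSucc)) :=
          add_le_add_right (sum_le_sum fun i _ => hstep i) _
      _ = v X + v (prefixSet x (Fin.last m)) := by
          rw [Fin.sum_univ_succ_sub_castSucc fun r => v (prefixSet x r), prefixSet_zero, hz,
            sub_zero]
      _ ≤ 2 * v X := by linarith [hmono _ _ (prefixSet_subset_image x (Fin.last m))]
  linarith

/-- For a non-decreasing submodular `v` and `k`-element sets `X = {x_1,…,x_k}`,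
`Y = {y_1,…,y_k}`: if `v(x_r | {x_1,…,x_{r−1}}) ≥ v(y_{r+1} | {x_1,…,x_{r−1}})` for every
`r ∈ [k−1]`, then `v X ≥ (1/2)·v (Y \ {y_1})`. -/
theorem submodular_half_bound_shifted {G : Type*} [DecidableEq G] (v : Finset G → ℝ)
    (hnn : ∀ S, 0 ≤ v S) (hz : v ∅ = 0)
    (hmono : ∀ S T : Finset G, S ⊆ T → v S ≤ v T)
    (hsub : ∀ S T : Finset G, ∀ g, S ⊆ T → g ∉ T →
      v (insert g T) - v T ≤ v (insert g S) - v S)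
    {k : ℕ} (hk : 0 < k) (x y : Fin k → G)
    (hx : Function.Injective x) (hy : Function.Injective y)
    (h : ∀ r : Fin k, ∀ hr : r.val + 1 < k,
      v (insert (x r) (prefixSet x r)) - v (prefixSet x r) ≥
        v (insert (y ⟨r.val + 1, hr⟩) (prefixSet x r)) - v (prefixSet x r)) :
    v (Finset.univ.image x) ≥
      (1 / 2) * v ((Finset.univ.image y).erase (y ⟨0, hk⟩)) :=
  submodular_half_bound_shifted_general v hz hmono hsub hk x y h
end

section
/- Let v be a non-decreasing submodular function on a finite set M, let X = {x_1, …, x_k}, Y1 = {y¹_1,…,y¹_{τ1}} and Y2 = {y²_1,…,y²_{τ2}} be subsets of M with τ1, τ2 ≤ k, such that for every ℓ ∈ {1,2} and every r ≤ τ_ℓ, v(x_r | {x_1,…,x_{r−1}}) ≥ v(yℓ_r | {x_1,…,x_{r−1}}). Then v(Y1 ∪ Y2) ≤ 3·v(X). -/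
open Finset

theorem Finset.sum_union_le_add_of_nonneg {ι β : Type*} [DecidableEq ι] [AddCommMonoid β]
    [PartialOrder β] [IsOrderedAddMonoid β] {s t : Finset ι} {f : ι → β}
    (hf : ∀ i ∈ s ∩ t, 0 ≤ f i) :
    ∑ i ∈ s ∪ t, f i ≤ ∑ i ∈ s, f i + ∑ i ∈ t, f i := by
  rw [← sum_union_inter]
  exact le_add_of_nonneg_right (sum_nonneg hf)

def IsSubmodular {G : Type*} [DecidableEq G] (v : Finset G → ℝ) : Prop :=
  ∀ S T : Finset G, ∀ g, S ⊆ T → g ∉ T → v (insert g T) - v T ≤ v (insert g S) - v S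

section Submodular

variable {G : Type*} [DecidableEq G] {v : Finset G → ℝ}

theorem IsSubmodular.insert_sub_le (hmono : Monotone v) (hsub : IsSubmodular v)
    {S T : Finset G} (hST : S ⊆ T) (g : G) :
    v (insert g T) - v T ≤ v (insert g S) - v S := by
  by_cases hg : g ∈ T
  · rw [insert_eq_of_mem hg, sub_self, sub_nonneg]
    exact hmono (subset_insert g S)
  · exact hsub S T g hST hg

theorem IsSubmodular.le_add_sum_insert_sub (hmono : Monotone v) (hsub : IsSubmodular v)
    (X T : Finset G) :
    v (X ∪ T) ≤ v X + ∑ g ∈ T, (v (insert g X) - v X) := by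
  induction T using Finset.induction_on with
  | empty => simp
  | insert a T ha ih =>
    rw [sum_insert ha, union_insert]
    have := hsub.insert_sub_le hmono (subset_union_left : X ⊆ X ∪ T) a
    linarith

end Submodular

section Prefix

variable {G : Type*} [DecidableEq G] {k : ℕ} (x : Fin k → G)

/-- Indexing the prefixes by `ℕ` lets their increments telescope over `Finset.range`. -/
def prefixUpTo (n : ℕ) : Finset G :=
  (univ.filter fun j : Fin k => (j : ℕ) < n).image x

theorem prefixSet_eq_prefixUpTo (r : Fin k) : prefixSet x r = prefixUpTo x r := rfl

@[simp]
theorem prefixUpTo_zero : prefixUpTo x 0 = ∅ := by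
  simp [prefixUpTo]

theorem prefixUpTo_subset_image (n : ℕ) : prefixUpTo x n ⊆ univ.image x :=
  image_subset_image (filter_subset _ _)

theorem insert_prefixUpTo (r : Fin k) :
    insert (x r) (prefixUpTo x r) = prefixUpTo x (r + 1) := by
  ext g
  simp only [prefixUpTo, mem_insert, mem_image, mem_filter, mem_univ, true_and,
    Nat.lt_succ_iff_lt_or_eq]
  constructor
  · rintro (rfl | ⟨j, hj, rfl⟩)
    · exact ⟨r, Or.inr rfl, rfl⟩
    · exact ⟨j, Or.inl hj, rfl⟩
  · rintro ⟨j, hj | hj, rfl⟩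
    · exact Or.inr ⟨j, hj, rfl⟩
    · exact Or.inl (congrArg x (Fin.ext hj))

theorem sum_fin_prefixUpTo_sub (v : Finset G → ℝ) (hz : v ∅ = 0) (τ : ℕ) :
    ∑ r : Fin τ, (v (prefixUpTo x (r + 1)) - v (prefixUpTo x r)) = v (prefixUpTo x τ) := by
  rw [Fin.sum_univ_eq_sum_range (fun i => v (prefixUpTo x (i + 1)) - v (prefixUpTo x i)),
    sum_range_sub (fun i => v (prefixUpTo x i)), prefixUpTo_zero, hz, sub_zero]

end Prefix

theorem IsSubmodular.sum_image_insert_sub_le {G : Type*} [DecidableEq G] {v : Finset G → ℝ}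
    (hmono : Monotone v) (hsub : IsSubmodular v) (hz : v ∅ = 0)
    {k τ : ℕ} (hτ : τ ≤ k) (x : Fin k → G) (y : Fin τ → G)
    (hy : ∀ r : Fin τ,
      v (insert (y r) (prefixSet x (Fin.castLE hτ r))) - v (prefixSet x (Fin.castLE hτ r)) ≤
        v (insert (x (Fin.castLE hτ r)) (prefixSet x (Fin.castLE hτ r))) -
          v (prefixSet x (Fin.castLE hτ r))) :
    ∑ g ∈ univ.image y, (v (insert g (univ.image x)) - v (univ.image x)) ≤ v (univ.image x) := by
  set X := univ.image x
  have hstep (r : Fin τ) :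
      v (insert (y r) X) - v X ≤ v (prefixUpTo x (r + 1)) - v (prefixUpTo x r) := by
    have hyr := hy r
    rw [prefixSet_eq_prefixUpTo, insert_prefixUpTo, Fin.val_castLE] at hyr
    exact (hsub.insert_sub_le hmono (prefixUpTo_subset_image x r) (y r)).trans hyr
  calc ∑ g ∈ univ.image y, (v (insert g X) - v X)
      ≤ ∑ r, (v (insert (y r) X) - v X) :=
        sum_image_le_of_nonneg fun g _ => sub_nonneg.2 (hmono (subset_insert g X))
    _ ≤ ∑ r : Fin τ, (v (prefixUpTo x (r + 1)) - v (prefixUpTo x r)) :=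
        sum_le_sum fun r _ => hstep r
    _ = v (prefixUpTo x τ) := sum_fin_prefixUpTo_sub x v hz τ
    _ ≤ v X := hmono (prefixUpTo_subset_image x τ)

theorem submodular_third_bound_general {G : Type*} [DecidableEq G] (v : Finset G → ℝ)
    (hz : v ∅ = 0)
    (hmono : ∀ S T : Finset G, S ⊆ T → v S ≤ v T)
    (hsub : ∀ S T : Finset G, ∀ g, S ⊆ T → g ∉ T →
      v (insert g T) - v T ≤ v (insert g S) - v S)
    {k τ₁ τ₂ : ℕ} (hτ₁ : τ₁ ≤ k) (hτ₂ : τ₂ ≤ k)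
    (x : Fin k → G) (y₁ : Fin τ₁ → G) (y₂ : Fin τ₂ → G)
    (h₁ : ∀ r : Fin τ₁,
      v (insert (y₁ r) (prefixSet x (Fin.castLE hτ₁ r))) - v (prefixSet x (Fin.castLE hτ₁ r)) ≤
        v (insert (x (Fin.castLE hτ₁ r)) (prefixSet x (Fin.castLE hτ₁ r))) -
          v (prefixSet x (Fin.castLE hτ₁ r)))
    (h₂ : ∀ r : Fin τ₂,
      v (insert (y₂ r) (prefixSet x (Fin.castLE hτ₂ r))) - v (prefixSet x (Fin.castLE hτ₂ r)) ≤
        v (insert (x (Fin.castLE hτ₂ r)) (prefixSet x (Fin.castLE hτ₂ r))) -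
          v (prefixSet x (Fin.castLE hτ₂ r))) :
    v (Finset.univ.image y₁ ∪ Finset.univ.image y₂) ≤ 3 * v (Finset.univ.image x) := by
  have hv : Monotone v := fun S T h => hmono S T h
  set X := univ.image x
  set Y₁ := univ.image y₁
  set Y₂ := univ.image y₂
  calc v (Y₁ ∪ Y₂)
      ≤ v (X ∪ (Y₁ ∪ Y₂)) := hv subset_union_right
    _ ≤ v X + ∑ g ∈ Y₁ ∪ Y₂, (v (insert g X) - v X) :=
        IsSubmodular.le_add_sum_insert_sub hv hsub _ _
    _ ≤ v X + (∑ g ∈ Y₁, (v (insert g X) - v X) + ∑ g ∈ Y₂, (v (insert g X) - v X)) := by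
        gcongr
        exact sum_union_le_add_of_nonneg fun g _ => sub_nonneg.2 (hv (subset_insert g X))
    _ ≤ v X + (v X + v X) := by
        gcongr
        · exact IsSubmodular.sum_image_insert_sub_le hv hsub hz hτ₁ x y₁ h₁
        · exact IsSubmodular.sum_image_insert_sub_le hv hsub hz hτ₂ x y₂ h₂
    _ = 3 * v X := by ring

/-- For a non-decreasing submodular `v`, a `k`-set `X = {x_1,…,x_k}` and sets
`Y1 = {y¹_1,…,y¹_{τ1}}`, `Y2 = {y²_1,…,y²_{τ2}}` with `τ1, τ2 ≤ k`: if for every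
`ℓ ∈ {1,2}` and `r ≤ τ_ℓ` we have `v(x_r | {x_1,…,x_{r−1}}) ≥ v(yℓ_r | {x_1,…,x_{r−1}})`,
then `v (Y1 ∪ Y2) ≤ 3·v X`. -/
theorem submodular_third_bound {G : Type*} [DecidableEq G] (v : Finset G → ℝ)
    (hnn : ∀ S, 0 ≤ v S) (hz : v ∅ = 0)
    (hmono : ∀ S T : Finset G, S ⊆ T → v S ≤ v T)
    (hsub : ∀ S T : Finset G, ∀ g, S ⊆ T → g ∉ T →
      v (insert g T) - v T ≤ v (insert g S) - v S)
    {k τ₁ τ₂ : ℕ} (hτ₁ : τ₁ ≤ k) (hτ₂ : τ₂ ≤ k)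
    (x : Fin k → G) (y₁ : Fin τ₁ → G) (y₂ : Fin τ₂ → G)
    (hx : Function.Injective x)
    (hy₁ : Function.Injective y₁) (hy₂ : Function.Injective y₂)
    (h₁ : ∀ r : Fin τ₁,
      v (insert (y₁ r) (prefixSet x (Fin.castLE hτ₁ r))) - v (prefixSet x (Fin.castLE hτ₁ r)) ≤
        v (insert (x (Fin.castLE hτ₁ r)) (prefixSet x (Fin.castLE hτ₁ r))) -
          v (prefixSet x (Fin.castLE hτ₁ r)))
    (h₂ : ∀ r : Fin τ₂,
      v (insert (y₂ r) (prefixSet x (Fin.castLE hτ₂ r))) - v (prefixSet x (Fin.castLE hτ₂ r)) ≤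
        v (insert (x (Fin.castLE hτ₂ r)) (prefixSet x (Fin.castLE hτ₂ r))) -
          v (prefixSet x (Fin.castLE hτ₂ r))) :
    v (Finset.univ.image y₁ ∪ Finset.univ.image y₂) ≤ 3 * v (Finset.univ.image x) :=
  submodular_third_bound_general v hz hmono hsub hτ₁ hτ₂ x y₁ y₂ h₁ h₂
end

section
/- In the Round-Robin algorithm with n agents and m = kn goods, let (A_1,…,A_n) be the output where agent i receives goods x_1,…,x_k (indexed by round) and agent j receives y_1,…,y_k (indexed by round). If i < j, then for every r ∈ [k], the good x_r is chosen by agent i before y_r is chosen by agent j; if i > j, then for every r ∈ [k−1], x_r is chosen before y_{r+1}. Consequently, if agent i's report is consistent with her singleton values, then v_i({x_r}) ≥ v_i({y_{r+1}}) for all r ∈ [k−1]. -/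
/-! Round-Robin mechanism: given reported strict total orders (duplicate-free lists
ranking the goods), in turns `t = 0, 1, 2, …` agent `t % n` receives her reported-top
good among those not yet allocated. -/

variable {G : Type*} [DecidableEq G]

/-- Goods remaining after `t` turns of the Round-Robin mechanism. -/
def rrRemaining {n : ℕ} (hn : 0 < n) (pref : Fin n → List G) (goods : Finset G) :
    ℕ → Finset G
  | 0 => goods
  | t + 1 =>
    let S := rrRemaining hn pref goods t
    match (pref ⟨t % n, Nat.mod_lt t hn⟩).find? (fun g => decide (g ∈ S)) with
    | none => S
    | some g => S.erase g

/-- The good picked at turn `t` (agent `t % n` picks her reported-top available good). -/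
def rrPicked {n : ℕ} (hn : 0 < n) (pref : Fin n → List G) (goods : Finset G) (t : ℕ) :
    Option G :=
  (pref ⟨t % n, Nat.mod_lt t hn⟩).find? fun g => decide (g ∈ rrRemaining hn pref goods t)

/-- The bundle allocated to agent `i` by Round-Robin. -/
def rrBundle {n : ℕ} (hn : 0 < n) (pref : Fin n → List G) (goods : Finset G) (i : Fin n) :
    Finset G :=
  ((Finset.range goods.card).filter fun t => t % n = i.val).biUnion fun t =>
    (rrPicked hn pref goods t).toFinset

/-- Goods allocated strictly before turn `t`. -/
def rrAllocatedBefore {n : ℕ} (hn : 0 < n) (pref : Fin n → List G) (goods : Finset G)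
    (t : ℕ) : Finset G := goods \ rrRemaining hn pref goods t

/-- A valid report is a strict total order on the goods: a duplicate-free list
enumerating exactly the goods. -/
def ValidReport (goods : Finset G) (l : List G) : Prop :=
  l.Nodup ∧ ∀ g, g ∈ l ↔ g ∈ goods

lemma rrRemaining_succ_subset {n : ℕ} (hn : 0 < n) (pref : Fin n → List G)
    (goods : Finset G) (t : ℕ) :
    rrRemaining hn pref goods (t + 1) ⊆ rrRemaining hn pref goods t := by
  show (match (pref ⟨t % n, Nat.mod_lt t hn⟩).find?
      (fun g => decide (g ∈ rrRemaining hn pref goods t)) with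
    | none => rrRemaining hn pref goods t
    | some g => (rrRemaining hn pref goods t).erase g) ⊆ rrRemaining hn pref goods t
  cases (pref ⟨t % n, Nat.mod_lt t hn⟩).find?
      (fun g => decide (g ∈ rrRemaining hn pref goods t)) with
  | none => exact subset_rfl
  | some g => exact Finset.erase_subset _ _

lemma rrRemaining_subset {n : ℕ} (hn : 0 < n) (pref : Fin n → List G)
    (goods : Finset G) {s t : ℕ} (hst : s ≤ t) :
    rrRemaining hn pref goods t ⊆ rrRemaining hn pref goods s := by
  induction t with
  | zero => simpa [Nat.le_zero.mp hst] using subset_rfl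
  | succ t ih =>
    rcases Nat.lt_or_ge s (t + 1) with h | h
    · exact (rrRemaining_succ_subset hn pref goods t).trans (ih (Nat.lt_succ_iff.mp h))
    · simpa [Nat.le_antisymm hst h] using subset_rfl

lemma find?_pairwise {R : G → G → Prop} {p : G → Bool} :
    ∀ {l : List G}, l.Pairwise R → ∀ {a : G}, l.find? p = some a →
      ∀ b ∈ l, p b = true → a = b ∨ R a b := by
  intro l hl
  induction l with
  | nil => intro a ha; simp at ha
  | cons x l ih =>
    intro a ha b hb hpb
    rw [List.pairwise_cons] at hl
    by_cases hx : p x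
    · rw [List.find?_cons_of_pos hx] at ha
      cases ha
      rcases List.mem_cons.mp hb with rfl | hb
      · exact Or.inl rfl
      · exact Or.inr (hl.1 b hb)
    · rw [List.find?_cons_of_neg (by simpa using hx)] at ha
      rcases List.mem_cons.mp hb with rfl | hb
      · exact absurd hpb hx
      · exact ih hl.2 ha b hb hpb

lemma rrPicked_agent {n : ℕ} (hn : 0 < n) (pref : Fin n → List G) (goods : Finset G)
    (i : Fin n) (r : ℕ) :
    rrPicked hn pref goods (r * n + i.val) =
      (pref i).find? fun g => decide (g ∈ rrRemaining hn pref goods (r * n + i.val)) := by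
  unfold rrPicked
  congr 1
  congr 1
  ext
  simp [Nat.add_comm (r * n) i.val, Nat.add_mul_mod_self_right,
    Nat.mod_eq_of_lt i.isLt]

/-- In Round-Robin with `n` agents and `m = k·n` goods (agent `i`'s `r`-th pick happens at
turn `r·n + i`, zero-indexed): (a) if `i < j` then agent `i`'s round-`r` pick happens at an
earlier turn than agent `j`'s round-`r` pick; (b) if `j < i` then agent `i`'s round-`r`
pick happens at an earlier turn than agent `j`'s round-`(r+1)` pick; (c) consequently, if
agent `i`'s report is consistent with her singleton values, then `v_i({x_r}) ≥ v_i({y_{r+1}})`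
for all `r ∈ [k−1]`, where `x_r`, `y_r` denote the goods agents `i` and `j` receive in
round `r`. -/
theorem roundRobin_pick_order {n k : ℕ} (hn : 0 < n)
    (goods : Finset G) (hm : goods.card = k * n)
    (v : Finset G → ℝ) (hnn : ∀ S, 0 ≤ v S)
    (pref : Fin n → List G)
    (hvalid : ∀ i, ValidReport goods (pref i))
    (i j : Fin n) (hij : i ≠ j) :
    (i.val < j.val → ∀ r, r < k → r * n + i.val < r * n + j.val) ∧
    (j.val < i.val → ∀ r, r + 1 < k → r * n + i.val < (r + 1) * n + j.val) ∧
    ((pref i).Pairwise (fun a b => v {b} ≤ v {a}) →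
      ∀ r, r + 1 < k → ∀ a b : G,
        rrPicked hn pref goods (r * n + i.val) = some a →
        rrPicked hn pref goods ((r + 1) * n + j.val) = some b →
        v {b} ≤ v {a}) := by
  have key : ∀ r : ℕ, r * n + i.val < (r + 1) * n + j.val := fun r => by
    have h1 : (r + 1) * n = r * n + n := by ring
    have := i.isLt; omega
  refine ⟨fun h r _ => by omega, fun h r _ => key r, ?_⟩
  intro hpw r hr a b ha hb
  have hlt : r * n + i.val < (r + 1) * n + j.val := key r
  rw [rrPicked_agent hn pref goods i r] at ha
  rw [rrPicked_agent hn pref goods j (r + 1)] at hb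
  -- b is in the remaining set at the earlier turn
  have hbmem : b ∈ rrRemaining hn pref goods ((r + 1) * n + j.val) := by
    simpa using List.find?_some hb
  have hbmem' : b ∈ rrRemaining hn pref goods (r * n + i.val) :=
    rrRemaining_subset hn pref goods hlt.le hbmem
  have hbgoods : b ∈ goods :=
    rrRemaining_subset hn pref goods (Nat.zero_le _) hbmem'
  have hbl : b ∈ pref i := ((hvalid i).2 b).mpr hbgoods
  rcases find?_pairwise hpw ha b hbl (by simpa using hbmem') with rfl | hR
  · exact le_refl _
  · exact hR
end

section
/- There exists an instance with 2 agents and 4 goods, each agent having a non-decreasing submodular valuation function, such that the Round-Robin mechanism admits no (3/4 + ε)-approximate pure Nash equilibrium for any ε > 0. Concretely: all singletons have value 2 for both agents, all 3-sets and 4-sets have value 4, agent 1's values on 2-sets are 3 except v_1({g_1,g_4}) = v_1({g_2,g_3}) = 4, and agent 2's values on 2-sets are 4 except v_2({g_1,g_4}) = v_2({g_2,g_3}) = 3; these valuations are submodular, and in every outcome of Round-Robin some agent receives value 3 but can deviate to obtain value 4. -/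
/-! Round-Robin mechanism: given reported strict total orders (duplicate-free lists
ranking the goods), in turns `t = 0, 1, 2, …` agent `t % n` receives her reported-top
good among those not yet allocated. -/

variable {G : Type*} [DecidableEq G]

/-- The valuations of the two agents over four goods `g_1,…,g_4` (encoded `0,…,3 : Fin 4`):
all singletons have value 2, all sets of size ≥ 3 have value 4; agent 1's 2-sets have
value 3 except `{g_1,g_4}` and `{g_2,g_3}` which have value 4; agent 2's 2-sets have
value 4 except `{g_1,g_4}` and `{g_2,g_3}` which have value 3. -/
noncomputable def vNo : Fin 2 → Finset (Fin 4) → ℝ := fun i S =>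
  if S.card = 0 then 0
  else if S.card = 1 then 2
  else if 3 ≤ S.card then 4
  else if S = {0, 3} ∨ S = {1, 2} then (if i = 0 then 4 else 3)
  else (if i = 0 then 3 else 4)


/-! Round-Robin gives each agent two goods, and the two bundles are complementary. On 2-sets
the agents' values are swapped exactly on the pairs `{g₁, g₄}` and `{g₂, g₃}`, and the
complement of such a pair is the other one, so in every outcome one agent gets value `3`.
Each agent can nevertheless secure `4`: the first picker reports first the pair among
`{g₁, g₄}`, `{g₂, g₃}` that avoids her opponent's favourite good, and the second picker takes
the partner of the first picker's favourite good, which every later good completes to a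
non-exceptional pair. Passing from `3` to `4` is a gain by a factor `4/3 > 1/(3/4 + ε)`. -/

theorem ValidReport.validReport_iff_perm {α : Type*} {goods : Finset α} {t l : List α}
    (ht : ValidReport goods t) : ValidReport goods l ↔ l.Perm t :=
  ⟨fun hl => (List.perm_ext_iff_of_nodup hl.1 ht.1).2 fun g => (hl.2 g).trans (ht.2 g).symm,
    fun h => ⟨h.nodup_iff.2 ht.1, fun g => h.mem_iff.trans (ht.2 g)⟩⟩

-- `permutations'`, unlike `permutations`, is structurally recursive, so `decide` can range over it.
def reports : List (List (Fin 4)) := List.permutations' [0, 1, 2, 3]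

theorem validReport_univ_iff_mem_reports {l : List (Fin 4)} :
    ValidReport Finset.univ l ↔ l ∈ reports :=
  (ValidReport.validReport_iff_perm ⟨by decide, by decide⟩).trans List.mem_permutations'.symm

-- `vNo` with values in `ℕ`, so that statements about it are decidable.
def vNat : Fin 2 → Finset (Fin 4) → ℕ := fun i S =>
  if S.card = 0 then 0
  else if S.card = 1 then 2
  else if 3 ≤ S.card then 4
  else if S = {0, 3} ∨ S = {1, 2} then (if i = 0 then 4 else 3)
  else (if i = 0 then 3 else 4)

theorem vNo_eq_vNat (i : Fin 2) (S : Finset (Fin 4)) : vNo i S = vNat i S := by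
  unfold vNo vNat
  split_ifs <;> norm_num

theorem vNat_mono : ∀ i : Fin 2, ∀ S T : Finset (Fin 4), S ⊆ T → vNat i S ≤ vNat i T := by
  decide

theorem vNat_submodular : ∀ i : Fin 2, ∀ S T : Finset (Fin 4), ∀ g, S ⊆ T → g ∉ T →
    vNat i (insert g T) + vNat i S ≤ vNat i (insert g S) + vNat i T := by
  decide

theorem vNo_mono (i : Fin 2) {S T : Finset (Fin 4)} (h : S ⊆ T) : vNo i S ≤ vNo i T := by
  rw [vNo_eq_vNat, vNo_eq_vNat]
  exact_mod_cast vNat_mono i S T h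

theorem vNo_submodular (i : Fin 2) {S T : Finset (Fin 4)} {g : Fin 4} (hST : S ⊆ T)
    (hg : g ∉ T) : vNo i (insert g T) - vNo i T ≤ vNo i (insert g S) - vNo i S := by
  simp only [vNo_eq_vNat, sub_le_sub_iff]
  exact_mod_cast vNat_submodular i S T g hST hg

-- Pairs up the goods of the exceptional 2-sets `{g₁, g₄}` and `{g₂, g₃}`.
def partner : Fin 4 → Fin 4 := ![3, 2, 1, 0]

theorem partner_ne_self : ∀ a, partner a ≠ a := by
  decide

theorem vNat_zero_eq_three_or_vNat_one_compl_eq_three :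
    ∀ S : Finset (Fin 4), S.card = 2 → vNat 0 S = 3 ∨ vNat 1 (Finset.univ \ S) = 3 := by
  decide

theorem vNat_one_eq_four_of_partner_mem :
    ∀ (S : Finset (Fin 4)) (a : Fin 4), S.card = 2 → partner a ∈ S → a ∉ S → vNat 1 S = 4 := by
  decide

theorem exists_report_take_two_avoiding :
    ∀ b : Fin 4, ∃ l ∈ reports, b ∉ l.take 2 ∧ vNat 0 (l.take 2).toFinset = 4 := by
  decide

theorem exists_report_headD_eq : ∀ x : Fin 4, ∃ l ∈ reports, l.headD 0 = x := by
  decide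

abbrev bundle (pref : Fin 2 → List (Fin 4)) (i : Fin 2) : Finset (Fin 4) :=
  rrBundle (n := 2) (by norm_num) pref Finset.univ i

theorem bundle_one_eq_compl : ∀ l₀ ∈ reports, ∀ l₁ ∈ reports,
    bundle ![l₀, l₁] 1 = Finset.univ \ bundle ![l₀, l₁] 0 := by
  decide

theorem card_bundle_zero : ∀ l₀ ∈ reports, ∀ l₁ ∈ reports, (bundle ![l₀, l₁] 0).card = 2 := by
  decide

theorem headD_mem_bundle_zero : ∀ l₀ ∈ reports, ∀ l₁ ∈ reports,
    l₀.headD 0 ∈ bundle ![l₀, l₁] 0 := by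
  decide

theorem headD_mem_bundle_one : ∀ l₀ ∈ reports, ∀ l₁ ∈ reports,
    l₁.headD 0 ≠ l₀.headD 0 → l₁.headD 0 ∈ bundle ![l₀, l₁] 1 := by
  decide

theorem bundle_zero_eq_take_two : ∀ l₀ ∈ reports, ∀ l₁ ∈ reports,
    l₁.headD 0 ∉ l₀.take 2 → bundle ![l₀, l₁] 0 = (l₀.take 2).toFinset := by
  decide

section
variable {pref : Fin 2 → List (Fin 4)}

theorem exists_vNat_bundle_eq_three (hpref : ∀ i, pref i ∈ reports) :
    ∃ i, vNat i (bundle pref i) = 3 := by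
  rw [show pref = ![pref 0, pref 1] from List.ofFn_inj.mp rfl]
  rcases vNat_zero_eq_three_or_vNat_one_compl_eq_three _
      (card_bundle_zero _ (hpref 0) _ (hpref 1)) with h | h
  · exact ⟨0, h⟩
  · exact ⟨1, bundle_one_eq_compl _ (hpref 0) _ (hpref 1) ▸ h⟩

theorem exists_deviation_zero (hpref : ∀ i, pref i ∈ reports) :
    ∃ l ∈ reports, vNat 0 (bundle (Function.update pref 0 l) 0) = 4 := by
  obtain ⟨l, hl, hb, h4⟩ := exists_report_take_two_avoiding ((pref 1).headD 0)
  refine ⟨l, hl, ?_⟩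
  rw [show Function.update pref 0 l = ![l, pref 1] from List.ofFn_inj.mp rfl,
    bundle_zero_eq_take_two _ hl _ (hpref 1) hb, h4]

theorem exists_deviation_one (hpref : ∀ i, pref i ∈ reports) :
    ∃ l ∈ reports, vNat 1 (bundle (Function.update pref 1 l) 1) = 4 := by
  set a := (pref 0).headD 0
  obtain ⟨l, hl, ha⟩ := exists_report_headD_eq (partner a)
  refine ⟨l, hl, ?_⟩
  rw [show Function.update pref 1 l = ![pref 0, l] from List.ofFn_inj.mp rfl]
  have hcompl := bundle_one_eq_compl _ (hpref 0) _ hl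
  refine vNat_one_eq_four_of_partner_mem _ a ?_ ?_ ?_
  · rw [hcompl, Finset.card_univ_sdiff, card_bundle_zero _ (hpref 0) _ hl]
    rfl
  · exact ha ▸ headD_mem_bundle_one _ (hpref 0) _ hl (ha ▸ partner_ne_self a)
  · rw [hcompl, Finset.mem_sdiff, not_and, not_not]
    exact fun _ => headD_mem_bundle_zero _ (hpref 0) _ hl

theorem exists_deviation (hpref : ∀ i, pref i ∈ reports) (i : Fin 2) :
    ∃ l ∈ reports, vNat i (bundle (Function.update pref i l) i) = 4 := by
  fin_cases i
  exacts [exists_deviation_zero hpref, exists_deviation_one hpref]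

end

/-- There is an instance with 2 agents and 4 goods, with non-decreasing submodular
valuations (namely `vNo`), in which the Round-Robin mechanism admits no
`(3/4 + ε)`-approximate pure Nash equilibrium for any `ε > 0`: for every reported
profile some agent can unilaterally deviate and multiply her true value by more
than `1/(3/4 + ε)`. -/
theorem no_three_quarters_PNE :
    (∀ i : Fin 2, ∀ S T : Finset (Fin 4), S ⊆ T → vNo i S ≤ vNo i T) ∧
    (∀ i : Fin 2, ∀ S T : Finset (Fin 4), ∀ g, S ⊆ T → g ∉ T →
      vNo i (insert g T) - vNo i T ≤ vNo i (insert g S) - vNo i S) ∧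
    (∀ ε : ℝ, 0 < ε →
      ∀ pref : Fin 2 → List (Fin 4),
        (∀ i, ValidReport (Finset.univ : Finset (Fin 4)) (pref i)) →
        ∃ (i : Fin 2) (l' : List (Fin 4)),
          ValidReport (Finset.univ : Finset (Fin 4)) l' ∧
          (3 / 4 + ε) *
              vNo i (rrBundle (n := 2) (by norm_num)
                (Function.update pref i l') Finset.univ i) >
            vNo i (rrBundle (n := 2) (by norm_num) pref Finset.univ i)) := by
  refine ⟨fun i S T => vNo_mono i, fun i S T g => vNo_submodular i, ?_⟩
  intro ε hε pref hpref
  have hrep i : pref i ∈ reports := validReport_univ_iff_mem_reports.1 (hpref i)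
  obtain ⟨i, h3⟩ := exists_vNat_bundle_eq_three hrep
  obtain ⟨l, hl, h4⟩ := exists_deviation hrep i
  refine ⟨i, l, validReport_univ_iff_mem_reports.2 hl, ?_⟩
  rw [vNo_eq_vNat, vNo_eq_vNat, h4, h3]
  push_cast
  linarith
end

section
/- Let v be a non-decreasing submodular function on a finite set M and let X = {x_1,…,x_k} be built greedily: x_r is a good of maximum marginal value v(· | {x_1,…,x_{r−1}}) among goods in some available set S_r, where each S_r contains all goods of Y \ allocated-so-far for a fixed k-set Y ⊆ M with y_{r+1}, …, y_k ∈ S_r (goods of Y indexed so that y_{r+1} is available when x_r is picked). Then v(X) ≥ (1/2)·v(Y \ {y_1}). -/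

lemma marg_subadd {G : Type*} [DecidableEq G] (v : Finset G → ℝ)
    (hmono : ∀ S T : Finset G, S ⊆ T → v S ≤ v T)
    (hsub : ∀ S T : Finset G, ∀ g, S ⊆ T → g ∉ T →
      v (insert g T) - v T ≤ v (insert g S) - v S)
    (X : Finset G) : ∀ T : Finset G,
    v (X ∪ T) ≤ v X + ∑ g ∈ T, (v (insert g X) - v X) := by
  intro T
  induction T using Finset.induction with
  | empty => simp
  | @insert a T ha ih =>
    rw [Finset.sum_insert ha]
    have hins : X ∪ insert a T = insert a (X ∪ T) := by
      ext g; simp [or_comm, or_left_comm, or_assoc]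
    rw [hins]
    by_cases haX : a ∈ X ∪ T
    · rw [Finset.insert_eq_self.mpr haX]
      have h0 : 0 ≤ v (insert a X) - v X := by
        have := hmono X (insert a X) (Finset.subset_insert _ _); linarith
      linarith
    · have := hsub X (X ∪ T) a Finset.subset_union_left haX
      linarith

lemma prefixQ {G : Type*} [DecidableEq G] {k : ℕ} (x : Fin k → G) (r : Fin k) :
    prefixSet x r = (Finset.univ.filter fun j : Fin k => j.val < r.val).image x := by
  rfl

lemma insert_prefix {G : Type*} [DecidableEq G] {k : ℕ} (x : Fin k → G) (r : Fin k) :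
    insert (x r) (prefixSet x r)
      = (Finset.univ.filter fun j : Fin k => j.val < r.val + 1).image x := by
  rw [prefixQ]
  have : (Finset.univ.filter fun j : Fin k => j.val < r.val + 1)
      = insert r (Finset.univ.filter fun j : Fin k => j.val < r.val) := by
    ext j
    simp [Nat.lt_succ_iff_lt_or_eq, Fin.ext_iff, or_comm]
    exact le_iff_eq_or_lt.trans (by rw [Fin.ext_iff])
  rw [this, Finset.image_insert]

lemma telescope {G : Type*} [DecidableEq G] (v : Finset G → ℝ) (hz : v ∅ = 0)
    {k : ℕ} (x : Fin k → G) :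
    ∑ r : Fin k, (v (insert (x r) (prefixSet x r)) - v (prefixSet x r))
      = v (Finset.univ.image x) := by
  set Q : ℕ → Finset G := fun n => (Finset.univ.filter fun j : Fin k => j.val < n).image x with hQ
  have h1 : ∀ r : Fin k, v (insert (x r) (prefixSet x r)) - v (prefixSet x r)
      = v (Q (r.val + 1)) - v (Q r.val) := by
    intro r; rw [insert_prefix, prefixQ]
  rw [Finset.sum_congr rfl (fun r _ => h1 r), Fin.sum_univ_eq_sum_range
    (fun n => v (Q (n+1)) - v (Q n)), Finset.sum_range_sub (fun n => v (Q n))]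
  have h0 : Q 0 = ∅ := by simp [hQ]
  have hk' : Q k = Finset.univ.image x := by
    simp [hQ, Finset.filter_true_of_mem (fun (j : Fin k) _ => j.isLt)]
  rw [h0, hk', hz, sub_zero]

/-- Greedy-response property: if `X = {x_1,…,x_k}` is built greedily so that for each `r`
and each `t > r` we have `v(x_r | {x_1,…,x_{r−1}}) ≥ v(y_t | {x_1,…,x_{r−1}})`, where `v`
is non-decreasing and submodular and `Y = {y_1,…,y_k}`, then `v X ≥ (1/2)·v (Y \ {y_1})`. -/
theorem greedy_half_ef1 {G : Type*} [DecidableEq G] (v : Finset G → ℝ)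
    (hnn : ∀ S, 0 ≤ v S) (hz : v ∅ = 0)
    (hmono : ∀ S T : Finset G, S ⊆ T → v S ≤ v T)
    (hsub : ∀ S T : Finset G, ∀ g, S ⊆ T → g ∉ T →
      v (insert g T) - v T ≤ v (insert g S) - v S)
    {k : ℕ} (hk : 0 < k) (x y : Fin k → G)
    (hx : Function.Injective x) (hy : Function.Injective y)
    (hgreedy : ∀ r t : Fin k, r < t →
      v (insert (y t) (prefixSet x r)) - v (prefixSet x r) ≤
        v (insert (x r) (prefixSet x r)) - v (prefixSet x r)) :
    v (Finset.univ.image x) ≥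
      (1 / 2) * v ((Finset.univ.image y).erase (y ⟨0, hk⟩)) := by
  set X := Finset.univ.image x with hX
  set T := (Finset.univ.image y).erase (y ⟨0, hk⟩) with hT
  set marg : Fin k → ℝ :=
    fun r => v (insert (x r) (prefixSet x r)) - v (prefixSet x r) with hmarg
  have hmargnn : ∀ r : Fin k, 0 ≤ marg r := fun r => by
    have := hmono _ _ (Finset.subset_insert (x r) (prefixSet x r))
    simp only [hmarg]; linarith
  have hprefsub : ∀ r : Fin k, prefixSet x r ⊆ X :=
    fun r => Finset.image_subset_image (Finset.filter_subset _ _)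
  have hB := marg_subadd v hmono hsub X T
  have hA : v T ≤ v (X ∪ T) := hmono _ _ Finset.subset_union_right
  have hTim : T = (Finset.univ.erase (⟨0, hk⟩ : Fin k)).image y := by
    rw [hT, Finset.image_erase hy]
  have hsumT : ∑ g ∈ T, (v (insert g X) - v X)
      = ∑ t ∈ Finset.univ.erase (⟨0, hk⟩ : Fin k), (v (insert (y t) X) - v X) := by
    rw [hTim, Finset.sum_image (fun a _ b _ h => hy h)]
  set p : Fin k → Fin k :=
    fun t => ⟨t.val - 1, lt_of_le_of_lt (Nat.sub_le _ _) t.isLt⟩ with hp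
  have hpt : ∀ t ∈ Finset.univ.erase (⟨0, hk⟩ : Fin k),
      (v (insert (y t) X) - v X) ≤ marg (p t) := by
    intro t ht
    have ht0 : t.val ≠ 0 := by
      intro h
      exact (Finset.mem_erase.mp ht).1 (Fin.ext h)
    have hlt : p t < t := by
      simp only [hp, Fin.lt_def]
      exact Nat.sub_lt (Nat.pos_of_ne_zero ht0) one_pos
    have hstep1 : v (insert (y t) X) - v X
        ≤ v (insert (y t) (prefixSet x (p t))) - v (prefixSet x (p t)) := by
      by_cases hyX : y t ∈ X
      · rw [Finset.insert_eq_self.mpr hyX, sub_self]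
        have := hmono _ _ (Finset.subset_insert (y t) (prefixSet x (p t)))
        linarith
      · exact hsub _ _ _ (hprefsub (p t)) hyX
    exact hstep1.trans (hgreedy (p t) t hlt)
  have hsum2 : ∑ t ∈ Finset.univ.erase (⟨0, hk⟩ : Fin k), marg (p t)
      ≤ ∑ r : Fin k, marg r := by
    have hinj : Set.InjOn p (Finset.univ.erase (⟨0, hk⟩ : Fin k)) := by
      intro a ha b hb hab
      have ha0 : a.val ≠ 0 := fun h => (Finset.mem_erase.mp ha).1 (Fin.ext h)
      have hb0 : b.val ≠ 0 := fun h => (Finset.mem_erase.mp hb).1 (Fin.ext h)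
      have : a.val - 1 = b.val - 1 := congrArg Fin.val hab
      exact Fin.ext (by omega)
    rw [← Finset.sum_image (fun a ha b hb h => hinj ha hb h)]
    exact Finset.sum_le_sum_of_subset_of_nonneg (Finset.subset_univ _)
      (fun r _ _ => hmargnn r)
  have htel : ∑ r : Fin k, marg r = v X := telescope v hz x
  have hchain : v T ≤ 2 * v X := by
    have h3 : ∑ g ∈ T, (v (insert g X) - v X) ≤ v X := by
      rw [hsumT]
      calc ∑ t ∈ Finset.univ.erase (⟨0, hk⟩ : Fin k), (v (insert (y t) X) - v X)
          ≤ ∑ t ∈ Finset.univ.erase (⟨0, hk⟩ : Fin k), marg (p t) :=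
            Finset.sum_le_sum hpt
        _ ≤ ∑ r : Fin k, marg r := hsum2
        _ = v X := htel
    linarith
  linarith
end

section
/- Let v_1, v_2 be additive valuations for two agents over a finite set M, and let (≻_1, ≻_2) be an α-approximate pure Nash equilibrium of the Round-Robin mechanism with resulting allocation (A_1, A_2). Then (A_1, A_2) is (α/(2−α))-EF1 with respect to v_1, v_2. -/
/-! Round-Robin mechanism: given reported strict total orders (duplicate-free lists
ranking the goods), in turns `t = 0, 1, 2, …` agent `t % n` receives her reported-top
good among those not yet allocated. -/

variable {G : Type*} [DecidableEq G]

section helpers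

variable {n : ℕ} (hn : 0 < n) (pref : Fin n → List G) (goods : Finset G)

lemma rem_succ_eq (t : ℕ) :
    rrRemaining hn pref goods (t+1) =
      match rrPicked hn pref goods t with
      | none => rrRemaining hn pref goods t
      | some g => (rrRemaining hn pref goods t).erase g := rfl

lemma rem_succ_subset (t : ℕ) :
    rrRemaining hn pref goods (t+1) ⊆ rrRemaining hn pref goods t := by
  rw [rem_succ_eq]
  cases rrPicked hn pref goods t with
  | none => exact Finset.Subset.refl _
  | some g => exact Finset.erase_subset _ _

lemma rem_mono : ∀ {s t : ℕ}, s ≤ t →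
    rrRemaining hn pref goods t ⊆ rrRemaining hn pref goods s := by
  intro s t h
  induction t with
  | zero => simp_all
  | succ t ih =>
    rcases Nat.lt_or_ge s (t+1) with h' | h'
    · exact (rem_succ_subset hn pref goods t).trans (ih (Nat.lt_succ_iff.mp h'))
    · have : s = t + 1 := le_antisymm h h'
      subst this; exact Finset.Subset.refl _

lemma rem_subset_goods (t : ℕ) : rrRemaining hn pref goods t ⊆ goods :=
  rem_mono hn pref goods (Nat.zero_le t)

lemma picked_spec (hvalid : ∀ i, ValidReport goods (pref i)) {t : ℕ}
    (hne : (rrRemaining hn pref goods t).Nonempty) :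
    ∃ g, rrPicked hn pref goods t = some g ∧ g ∈ rrRemaining hn pref goods t ∧
      rrRemaining hn pref goods (t+1) = (rrRemaining hn pref goods t).erase g := by
  obtain ⟨g0, hg0⟩ := hne
  have hg0g : g0 ∈ goods := rem_subset_goods hn pref goods t hg0
  have hsome : (rrPicked hn pref goods t).isSome := by
    rw [rrPicked, List.find?_isSome]
    exact ⟨g0, ((hvalid _).2 g0).mpr hg0g, by simpa using hg0⟩
  obtain ⟨g, hg⟩ := Option.isSome_iff_exists.mp hsome
  refine ⟨g, hg, by simpa using List.find?_some hg, ?_⟩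
  rw [rem_succ_eq, hg]

lemma rem_card (hvalid : ∀ i, ValidReport goods (pref i)) :
    ∀ {t : ℕ}, t ≤ goods.card →
      (rrRemaining hn pref goods t).card = goods.card - t := by
  intro t
  induction t with
  | zero => simp [rrRemaining]
  | succ t ih =>
    intro ht
    have ht' : t ≤ goods.card := Nat.le_of_succ_le ht
    have hpos : 0 < (rrRemaining hn pref goods t).card := by
      rw [ih ht']; omega
    obtain ⟨g, _, hgmem, herase⟩ :=
      picked_spec hn pref goods hvalid (Finset.card_pos.mp hpos)
    rw [herase, Finset.card_erase_of_mem hgmem, ih ht']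
    omega

/-- The chosen good at each turn, with a default. -/
noncomputable def rrPick (d : G) (t : ℕ) : G := (rrPicked hn pref goods t).getD d

lemma pick_spec (hvalid : ∀ i, ValidReport goods (pref i)) (d : G) {t : ℕ}
    (ht : t < goods.card) :
    rrPicked hn pref goods t = some (rrPick hn pref goods d t) ∧
    rrPick hn pref goods d t ∈ rrRemaining hn pref goods t ∧
    rrRemaining hn pref goods (t+1)
      = (rrRemaining hn pref goods t).erase (rrPick hn pref goods d t) := by
  have hpos : 0 < (rrRemaining hn pref goods t).card := by
    rw [rem_card hn pref goods hvalid (le_of_lt ht)]; omega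
  obtain ⟨g, hg, hgmem, herase⟩ := picked_spec hn pref goods hvalid (Finset.card_pos.mp hpos)
  have : rrPick hn pref goods d t = g := by rw [rrPick, hg]; rfl
  rw [this]
  exact ⟨hg, hgmem, herase⟩

lemma pick_injOn (hvalid : ∀ i, ValidReport goods (pref i)) (d : G) {s t : ℕ}
    (hs : s < goods.card) (ht : t < goods.card) (hst : s ≠ t) :
    rrPick hn pref goods d s ≠ rrPick hn pref goods d t := by
  wlog h : s < t generalizing s t
  · exact (this ht hs hst.symm (by omega)).symm
  obtain ⟨_, _, herase⟩ := pick_spec hn pref goods hvalid d hs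
  have htmem : rrPick hn pref goods d t ∈ rrRemaining hn pref goods (s+1) := by
    exact rem_mono hn pref goods h ((pick_spec hn pref goods hvalid d ht).2.1)
  rw [herase] at htmem
  exact fun hEq => (Finset.mem_erase.mp htmem).1 hEq.symm

lemma bundle_eq_image (hvalid : ∀ i, ValidReport goods (pref i)) (d : G) (i : Fin n) :
    rrBundle hn pref goods i =
      ((Finset.range goods.card).filter fun t => t % n = i.val).image
        (rrPick hn pref goods d) := by
  rw [rrBundle]
  ext g
  simp only [Finset.mem_biUnion, Finset.mem_image]
  refine exists_congr fun t => and_congr_right fun ht => ?_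
  have ht' : t < goods.card := Finset.mem_range.mp (Finset.mem_filter.mp ht).1
  rw [(pick_spec hn pref goods hvalid d ht').1]
  simp [eq_comm]

lemma sum_bundle (hvalid : ∀ i, ValidReport goods (pref i)) (d : G) (i : Fin n)
    (f : G → ℝ) :
    ∑ g ∈ rrBundle hn pref goods i, f g =
      ∑ t ∈ (Finset.range goods.card).filter fun t => t % n = i.val,
        f (rrPick hn pref goods d t) := by
  rw [bundle_eq_image hn pref goods hvalid d i]
  apply Finset.sum_image
  intro x hx y hy hxy
  by_contra hne
  exact pick_injOn hn pref goods hvalid d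
    (Finset.mem_range.mp (Finset.mem_filter.mp hx).1)
    (Finset.mem_range.mp (Finset.mem_filter.mp hy).1) hne hxy

lemma sum_goods (hvalid : ∀ i, ValidReport goods (pref i)) (d : G) (f : G → ℝ) :
    ∑ g ∈ goods, f g = ∑ t ∈ Finset.range goods.card, f (rrPick hn pref goods d t) := by
  have key : ∀ t ≤ goods.card, ∑ g ∈ goods, f g =
      (∑ g ∈ rrRemaining hn pref goods t, f g) +
        ∑ s ∈ Finset.range t, f (rrPick hn pref goods d s) := by
    intro t
    induction t with
    | zero => simp [rrRemaining]
    | succ t ih =>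
      intro ht
      obtain ⟨_, hmem, herase⟩ := pick_spec hn pref goods hvalid d (t := t) (by omega)
      rw [ih (by omega), herase, Finset.sum_range_succ,
        ← Finset.add_sum_erase _ f hmem]
      ring
  have := key goods.card le_rfl
  have hempty : rrRemaining hn pref goods goods.card = ∅ := by
    rw [← Finset.card_eq_zero, rem_card hn pref goods hvalid le_rfl]; omega
  rw [hempty] at this
  simpa using this

end helpers

/-- find? on a sorted-descending list returns a maximizer among satisfying elements. -/
lemma find?_max {f : G → ℝ} {p : G → Bool} :
    ∀ {l : List G}, l.Pairwise (fun a b => f b ≤ f a) →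
      ∀ {a b : G}, l.find? p = some a → b ∈ l → p b → f b ≤ f a := by
  intro l hl
  induction l with
  | nil => intro a b h; simp at h
  | cons x xs ih =>
    intro a b ha hb hpb
    rw [List.find?_cons] at ha
    by_cases hx : p x
    · rw [hx] at ha
      simp only [Option.some.injEq] at ha
      subst ha
      rcases List.mem_cons.mp hb with rfl | hb'
      · exact le_refl _
      · exact (List.pairwise_cons.mp hl).1 b hb'
    · rw [Bool.of_not_eq_true hx] at ha
      rcases List.mem_cons.mp hb with rfl | hb'
      · rw [hpb] at hx; simp at hx
      · exact ih (List.pairwise_cons.mp hl).2 ha hb' hpb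

lemma pick_greedy {n : ℕ} (hn : 0 < n) (pref : Fin n → List G) (goods : Finset G)
    (hvalid : ∀ i, ValidReport goods (pref i)) (d : G) {t : ℕ} (ht : t < goods.card)
    {f : G → ℝ} {io : Fin n} (hio : t % n = io.val)
    (hsorted : (pref io).Pairwise (fun a b => f b ≤ f a))
    {g : G} (hg : g ∈ rrRemaining hn pref goods t) :
    f g ≤ f (rrPick hn pref goods d t) := by
  have hidx : (⟨t % n, Nat.mod_lt t hn⟩ : Fin n) = io := Fin.ext hio
  have hfind := (pick_spec hn pref goods hvalid d ht).1
  rw [rrPicked, hidx] at hfind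
  exact find?_max hsorted hfind
    (((hvalid io).2 g).mpr (rem_subset_goods hn pref goods t hg)) (by simpa using hg)

lemma filter_mod2 (k : ℕ) (r : ℕ) (hr : r < 2) :
    (Finset.range (k*2)).filter (fun t => t % 2 = r) =
      (Finset.range k).image (fun s => 2*s + r) := by
  ext t
  simp only [Finset.mem_filter, Finset.mem_range, Finset.mem_image]
  constructor
  · rintro ⟨h1, h2⟩; exact ⟨t/2, by omega, by omega⟩
  · rintro ⟨s, hs, rfl⟩; omega

lemma sum_filter_mod2 (k : ℕ) (r : ℕ) (hr : r < 2) (f : ℕ → ℝ) :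
    ∑ t ∈ (Finset.range (k*2)).filter (fun t => t % 2 = r), f t =
      ∑ s ∈ Finset.range k, f (2*s + r) := by
  rw [filter_mod2 k r hr]
  exact Finset.sum_image (by intro x _ y _ h; have h' : 2*x + r = 2*y + r := h; omega)

/-- For two agents with additive valuations (`v_i S = Σ_{g ∈ S} w i g`), any
`α`-approximate pure Nash equilibrium of the Round-Robin mechanism yields an
`(α/(2−α))`-EF1 allocation with respect to the true valuations. -/
theorem two_agent_additive_PNE_EF1 {k : ℕ}
    (goods : Finset G) (hm : goods.card = k * 2)
    (w : Fin 2 → G → ℝ)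
    (hw : ∀ i g, 0 ≤ w i g)
    (α : ℝ) (hα0 : 0 < α) (hα1 : α ≤ 1)
    (pref : Fin 2 → List G)
    (hvalid : ∀ i, ValidReport goods (pref i))
    (hpne : ∀ (i : Fin 2) (l' : List G), ValidReport goods l' →
      α * ∑ g ∈ rrBundle (n := 2) (by norm_num) (Function.update pref i l') goods i, w i g ≤
        ∑ g ∈ rrBundle (n := 2) (by norm_num) pref goods i, w i g)
    (i j : Fin 2) (hij : i ≠ j)
    (hne : (rrBundle (n := 2) (by norm_num) pref goods j).Nonempty) :
    ∃ g ∈ rrBundle (n := 2) (by norm_num) pref goods j,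
      ∑ x ∈ rrBundle (n := 2) (by norm_num) pref goods i, w i x ≥
        (α / (2 - α)) *
          ∑ x ∈ (rrBundle (n := 2) (by norm_num) pref goods j).erase g, w i x := by
  classical
  have hn2 : (0:ℕ) < 2 := by norm_num
  -- dispose of the degenerate case of no goods
  rcases Nat.eq_zero_or_pos k with hk0 | hk
  · exfalso
    obtain ⟨g, hg⟩ := hne
    have hg' : g ∈ rrBundle hn2 pref goods j := hg
    rw [rrBundle, hm, hk0] at hg'
    simp at hg'
  have hm0 : 0 < goods.card := by omega
  obtain ⟨d, hd⟩ := Finset.card_pos.mp hm0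
  -- the truthful (descending) report of agent i
  set r : G → G → Prop := fun a b => w i b ≤ w i a with hr
  haveI : DecidableRel r := Classical.decRel r
  haveI : IsTotal G r := ⟨fun a b => le_total (w i b) (w i a)⟩
  haveI : IsTrans G r := ⟨fun a b c hab hbc => le_trans hbc hab⟩
  set T : List G := List.insertionSort r goods.toList with hTdef
  have hTperm : T.Perm goods.toList := List.perm_insertionSort r _
  have hTvalid : ValidReport goods T :=
    ⟨hTperm.nodup_iff.mpr goods.nodup_toList, fun g => by rw [hTperm.mem_iff]; simp⟩
  have hTsorted : T.Pairwise (fun a b => w i b ≤ w i a) := List.pairwise_insertionSort r _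
  set pref' := Function.update pref i T with hpref'
  have hvalid' : ∀ id, ValidReport goods (pref' id) := by
    intro id
    by_cases h : id = i
    · subst h; rw [hpref', Function.update_self]; exact hTvalid
    · rw [hpref', Function.update_of_ne h]; exact hvalid id
  have hprefi' : pref' i = T := Function.update_self i T pref
  have hvij : i.val ≠ j.val := fun h => hij (Fin.ext h)
  have hi2 : i.val < 2 := i.isLt
  have hj2 : j.val < 2 := j.isLt
  -- sum identities
  have hSA : ∑ g ∈ rrBundle hn2 pref goods i, w i g
      = ∑ s ∈ Finset.range k, w i (rrPick hn2 pref goods d (2*s + i.val)) := by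
    rw [sum_bundle hn2 pref goods hvalid d i (w i), hm, sum_filter_mod2 k i.val hi2]
  have hSB : ∑ g ∈ rrBundle hn2 pref goods j, w i g
      = ∑ s ∈ Finset.range k, w i (rrPick hn2 pref goods d (2*s + j.val)) := by
    rw [sum_bundle hn2 pref goods hvalid d j (w i), hm, sum_filter_mod2 k j.val hj2]
  have hSA' : ∑ g ∈ rrBundle hn2 pref' goods i, w i g
      = ∑ s ∈ Finset.range k, w i (rrPick hn2 pref' goods d (2*s + i.val)) := by
    rw [sum_bundle hn2 pref' goods hvalid' d i (w i), hm, sum_filter_mod2 k i.val hi2]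
  have hsplit : ∀ (q : Fin 2 → List G), (∀ id, ValidReport goods (q id)) →
      ∑ g ∈ goods, w i g
        = (∑ s ∈ Finset.range k, w i (rrPick hn2 q goods d (2*s + i.val)))
          + ∑ s ∈ Finset.range k, w i (rrPick hn2 q goods d (2*s + j.val)) := by
    intro q hq
    rw [sum_goods hn2 q goods hq d (w i), hm,
      ← Finset.sum_filter_add_sum_filter_not (Finset.range (k*2)) (fun t => t % 2 = i.val)]
    congr 1
    · rw [sum_filter_mod2 k i.val hi2]
    · rw [Finset.filter_congr (fun x _ => by
        constructor
        · intro hx; omega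
        · intro hx; omega : ∀ x ∈ Finset.range (k*2), (¬ x % 2 = i.val) ↔ x % 2 = j.val),
        sum_filter_mod2 k j.val hj2]
  have hG := hsplit pref hvalid
  have hG' := hsplit pref' hvalid'
  -- obtain gstar ∈ A_j and the key inequality  2 * v'A ≥ ∑ goods − w i gstar
  have hcase : (i.val = 0 ∧ j.val = 1) ∨ (i.val = 1 ∧ j.val = 0) := by omega
  obtain ⟨gstar, hgstar, key⟩ :
      ∃ g, g ∈ rrBundle hn2 pref goods j ∧
        (∑ x ∈ goods, w i x) - w i g
          ≤ 2 * ∑ s ∈ Finset.range k, w i (rrPick hn2 pref' goods d (2*s + i.val)) := by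
    rcases hcase with ⟨hiv, hjv⟩ | ⟨hiv, hjv⟩
    · -- agent i moves first: pair her pick 2s against opponent pick 2s+1
      obtain ⟨g, hg⟩ := hne
      refine ⟨g, hg, ?_⟩
      have pair : ∀ s ∈ Finset.range k,
          w i (rrPick hn2 pref' goods d (2*s + j.val))
            ≤ w i (rrPick hn2 pref' goods d (2*s + i.val)) := by
        intro s hs
        have hsk : s < k := Finset.mem_range.mp hs
        have h2s : 2*s < goods.card := by omega
        have h2s1 : 2*s + 1 < goods.card := by omega
        have hmem : rrPick hn2 pref' goods d (2*s + 1) ∈ rrRemaining hn2 pref' goods (2*s) :=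
          rem_succ_subset hn2 pref' goods (2*s)
            ((pick_spec hn2 pref' goods hvalid' d h2s1).2.1)
        rw [hiv, hjv]
        exact pick_greedy hn2 pref' goods hvalid' d h2s (io := i) (by omega)
          (hprefi' ▸ hTsorted) hmem
      have hle := Finset.sum_le_sum pair
      have hwg : 0 ≤ w i g := hw i g
      linarith [hG']
    · -- agent i moves second: the opponent's first pick is the EF1 good
      have h0m : 0 < goods.card := hm0
      have hj0 : (⟨0 % 2, Nat.mod_lt 0 hn2⟩ : Fin 2) = j := Fin.ext (show (0:ℕ) % 2 = j.val by omega)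
      have hpk0 : rrPick hn2 pref' goods d 0 = rrPick hn2 pref goods d 0 := by
        show (((pref' ⟨0 % 2, Nat.mod_lt 0 hn2⟩).find? fun g => decide (g ∈ goods)).getD d)
          = (((pref ⟨0 % 2, Nat.mod_lt 0 hn2⟩).find? fun g => decide (g ∈ goods)).getD d)
        rw [hj0, hpref', Function.update_of_ne (Ne.symm hij)]
      refine ⟨rrPick hn2 pref goods d 0, ?_, ?_⟩
      · rw [bundle_eq_image hn2 pref goods hvalid d j]
        exact Finset.mem_image.mpr ⟨0, Finset.mem_filter.mpr
          ⟨Finset.mem_range.mpr h0m, by omega⟩, rfl⟩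
      · -- pairing: opponent's pick 2s+2 against i's pick 2s+1
        have pair : ∀ s ∈ Finset.range (k-1),
            w i (rrPick hn2 pref' goods d (2*(s+1)))
              ≤ w i (rrPick hn2 pref' goods d (2*s + 1)) := by
          intro s hs
          have hsk : s < k - 1 := Finset.mem_range.mp hs
          have h2s1 : 2*s + 1 < goods.card := by omega
          have h2s2 : 2*s + 2 < goods.card := by omega
          have hmem : rrPick hn2 pref' goods d (2*s + 2)
              ∈ rrRemaining hn2 pref' goods (2*s + 1) :=
            rem_succ_subset hn2 pref' goods (2*s + 1)
              ((pick_spec hn2 pref' goods hvalid' d h2s2).2.1)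
          have : 2*(s+1) = 2*s + 2 := by ring
          rw [this]
          exact pick_greedy hn2 pref' goods hvalid' d h2s1 (io := i) (by omega)
            (hprefi' ▸ hTsorted) hmem
        -- v'B = Σ_{s<k} w i (pk' (2s)) = pk' 0 + Σ_{s<k-1} pk' (2(s+1))
        have hvB' : ∑ s ∈ Finset.range k, w i (rrPick hn2 pref' goods d (2*s + j.val))
            = (∑ s ∈ Finset.range (k-1), w i (rrPick hn2 pref' goods d (2*(s+1))))
              + w i (rrPick hn2 pref' goods d 0) := by
          simp only [hjv, Nat.add_zero]
          rw [show k = (k-1) + 1 from by omega, Finset.sum_range_succ']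
          norm_num
        have h1 : ∑ s ∈ Finset.range (k-1), w i (rrPick hn2 pref' goods d (2*(s+1)))
            ≤ ∑ s ∈ Finset.range (k-1), w i (rrPick hn2 pref' goods d (2*s + 1)) :=
          Finset.sum_le_sum pair
        have h2 : ∑ s ∈ Finset.range (k-1), w i (rrPick hn2 pref' goods d (2*s + 1))
            ≤ ∑ s ∈ Finset.range k, w i (rrPick hn2 pref' goods d (2*s + i.val)) := by
          simp only [hiv]
          exact Finset.sum_le_sum_of_subset_of_nonneg
            (Finset.range_subset_range.mpr (by omega)) (fun t _ _ => hw i _)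
        rw [hpk0] at hvB'
        linarith [hG']
  -- common ending
  refine ⟨gstar, hgstar, ?_⟩
  show ∑ x ∈ rrBundle hn2 pref goods i, w i x ≥
    (α / (2 - α)) * ∑ x ∈ (rrBundle hn2 pref goods j).erase gstar, w i x
  have hBsplit : ∑ g ∈ rrBundle hn2 pref goods j, w i g
      = w i gstar + ∑ x ∈ (rrBundle hn2 pref goods j).erase gstar, w i x :=
    (Finset.add_sum_erase _ _ hgstar).symm
  have hpneT : α * ∑ g ∈ rrBundle hn2 pref' goods i, w i g
      ≤ ∑ g ∈ rrBundle hn2 pref goods i, w i g := by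
    rw [hpref']
    exact hpne i T hTvalid
  set vA := ∑ x ∈ rrBundle hn2 pref goods i, w i x with hvA
  set b := ∑ x ∈ (rrBundle hn2 pref goods j).erase gstar, w i x with hb
  set v'A := ∑ s ∈ Finset.range k, w i (rrPick hn2 pref' goods d (2*s + i.val)) with hv'A
  rw [hSA'] at hpneT
  have hSsum : ∑ x ∈ goods, w i x = vA + (w i gstar + b) := by
    rw [hG, ← hSA, ← hSB, hBsplit]
  have h2α : (0:ℝ) < 2 - α := by linarith
  have hkey2 : α * ((∑ x ∈ goods, w i x) - w i gstar) ≤ α * (2 * v'A) :=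
    mul_le_mul_of_nonneg_left key hα0.le
  have hfin : α * (vA + b) ≤ 2 * vA := by
    have hE : (∑ x ∈ goods, w i x) - w i gstar = vA + b := by rw [hSsum]; ring
    rw [hE] at hkey2
    nlinarith [hpneT]
  rw [ge_iff_le, div_mul_eq_mul_div, div_le_iff₀ h2α]
  nlinarith [hfin]
end
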